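/- Let H, m ∈ ℝ, let p ≥ 2 be an integer, and let φ, ψ : ℝ × ℝ → ℝ be twice continuously differentiable functions that are 1-periodic in the second (space) variable and satisfy the evolution equations ∂_t φ(t,x) = e^{-Ht} ψ(t,x) and ∂_t ψ(t,x) = -m² e^{Ht} φ(t,x) - e^{Ht} |φ(t,x)|^{p-1} φ(t,x) + e^{-Ht} ∂_x² φ(t,x) for all (t,x). Define the total Hamiltonian H_C(t) = ∫_0^1 [ (1/2) e^{-Ht} ψ(t,x)² + (m²/2) e^{Ht} φ(t,x)² + (1/(p+1)) e^{Ht} |φ(t,x)|^{p+1} + (1/2) e^{-Ht} (∂_x φ(t,x))² ] dx. Then H_C is differentiable and for every t, H_C'(t) = (H/2) e^{Ht} ∫_0^1 [ -e^{-2Ht} ψ(t,x)² + m² φ(t,x)² + (2/(p+1)) |φ(t,x)|^{p+1} - e^{-2Ht} (∂_x φ(t,x))² ] dx. -/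

import Mathlib

/-!
Differentiating under the integral sign, the time derivative of the energy density consists of
the terms coming from the weights `e^{±Ht}`, which give the right-hand side, and the terms
produced by the evolution equations. In the latter the mass and nonlinear contributions of
`ψ ∂ₜψ` cancel against those of `∂ₜφ`, and, using `∂ₜ∂ₓφ = ∂ₓ∂ₜφ`, what remains is the total
derivative `e^{-2Ht} ∂ₓ(ψ ∂ₓφ)` of a `1`-periodic function, which integrates to zero over a period.
-/

open Real Function

section PartialDerivatives

variable {E : Type*} [NormedAddCommGroup E] [NormedSpace ℝ E]

theorem DifferentiableAt.hasDerivAt_slice_fst {g : ℝ × ℝ → E} {t x : ℝ}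
    (hg : DifferentiableAt ℝ g (t, x)) :
    HasDerivAt (fun s => g (s, x)) (fderiv ℝ g (t, x) (1, 0)) t :=
  hg.hasFDerivAt.comp_hasDerivAt (f := fun s => (s, x)) t
    ((hasDerivAt_id' t).prodMk (hasDerivAt_const t x))

theorem DifferentiableAt.hasDerivAt_slice_snd {g : ℝ × ℝ → E} {t x : ℝ}
    (hg : DifferentiableAt ℝ g (t, x)) :
    HasDerivAt (fun y => g (t, y)) (fderiv ℝ g (t, x) (0, 1)) x :=
  hg.hasFDerivAt.comp_hasDerivAt (f := fun y => (t, y)) x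
    ((hasDerivAt_const x t).prodMk (hasDerivAt_id' x))

variable {f : ℝ → ℝ → E}

theorem deriv_fst_eq_fderiv (hf : Differentiable ℝ (uncurry f)) (t x : ℝ) :
    deriv (fun s => f s x) t = fderiv ℝ (uncurry f) (t, x) (1, 0) :=
  (hf (t, x)).hasDerivAt_slice_fst.deriv

theorem deriv_snd_eq_fderiv (hf : Differentiable ℝ (uncurry f)) (t x : ℝ) :
    deriv (f t) x = fderiv ℝ (uncurry f) (t, x) (0, 1) :=
  (hf (t, x)).hasDerivAt_slice_snd.deriv

theorem ContDiff.uncurry_deriv_snd {n : ℕ} (hf : ContDiff ℝ (n + 1) (uncurry f)) :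
    ContDiff ℝ n (uncurry fun t x => deriv (f t) x) := by
  have : (uncurry fun t x => deriv (f t) x) = fun z => fderiv ℝ (uncurry f) z (0, 1) :=
    funext fun z => deriv_snd_eq_fderiv (hf.differentiable (by simp)) z.1 z.2
  rw [this]
  exact (hf.fderiv_right le_rfl).clm_apply contDiff_const

theorem ContDiff.deriv_fst_deriv_snd_comm (hf : ContDiff ℝ 2 (uncurry f)) (t x : ℝ) :
    deriv (fun s => deriv (f s) x) t = deriv (fun y => deriv (fun s => f s y) t) x := by
  set D := fderiv ℝ (uncurry f)
  have hf₁ : Differentiable ℝ (uncurry f) := hf.differentiable two_ne_zero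
  have hD : Differentiable ℝ D := (hf.fderiv_right (m := 1) le_rfl).differentiable one_ne_zero
  calc deriv (fun s => deriv (f s) x) t
      = deriv (fun s => D (s, x) (0, 1)) t := by simp only [deriv_snd_eq_fderiv hf₁, D]
    _ = fderiv ℝ D (t, x) (1, 0) (0, 1) :=
      ((hD (t, x)).hasDerivAt_slice_fst.clm_apply (hasDerivAt_const t _)).deriv.trans (by simp)
    _ = fderiv ℝ D (t, x) (0, 1) (1, 0) := hf.contDiffAt.isSymmSndFDerivAt (by simp) _ _
    _ = deriv (fun y => D (t, y) (1, 0)) x :=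
      (((hD (t, x)).hasDerivAt_slice_snd.clm_apply (hasDerivAt_const x _)).deriv.trans
        (by simp)).symm
    _ = deriv (fun y => deriv (fun s => f s y) t) x := by simp only [deriv_fst_eq_fderiv hf₁, D]

end PartialDerivatives

theorem Function.Periodic.deriv {E : Type*} [NormedAddCommGroup E] [NormedSpace ℝ E]
    {f : ℝ → E} {c : ℝ} (hf : Periodic f c) : Periodic (_root_.deriv f) c := fun x => by
  rw [← deriv_comp_add_const, show (fun y => f (y + c)) = f from funext hf]

theorem Function.Periodic.intervalIntegral_deriv_eq_zero {E : Type*} [NormedAddCommGroup E]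
    [NormedSpace ℝ E] [CompleteSpace E] {f : ℝ → E} {c : ℝ} (hf : Periodic f c) (hf₁ : ContDiff ℝ 1 f) (a : ℝ) :
    ∫ x in a..a + c, _root_.deriv f x = 0 := by
  rw [intervalIntegral.integral_deriv_eq_sub' f rfl
    (fun x _ => hf₁.differentiable one_ne_zero x) (hf₁.continuous_deriv le_rfl).continuousOn,
    hf a, sub_self]

theorem intervalIntegral.hasDerivAt_integral_of_continuous {E : Type*} [NormedAddCommGroup E]
    [NormedSpace ℝ E] {F F' : ℝ → ℝ → E} {a b : ℝ}
    (hF : Continuous (uncurry F)) (hF' : Continuous (uncurry F'))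
    (hderiv : ∀ s x, HasDerivAt (fun s => F s x) (F' s x) s) (t : ℝ) :
    HasDerivAt (fun s => ∫ x in a..b, F s x) (∫ x in a..b, F' t x) t := by
  obtain ⟨C, hC⟩ := (isCompact_closedBall t 1 |>.prod isCompact_uIcc).exists_bound_of_continuousOn
    hF'.continuousOn
  exact (hasDerivAt_integral_of_dominated_loc_of_deriv_le (bound := fun _ => C)
    (Metric.closedBall_mem_nhds t one_pos)
    (.of_forall fun s => (hF.uncurry_left s).aestronglyMeasurable)
    ((hF.uncurry_left t).intervalIntegrable a b) (hF'.uncurry_left t).aestronglyMeasurable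
    (.of_forall fun x hx s hs => hC (s, x) ⟨hs, Set.uIoc_subset_uIcc hx⟩)
    intervalIntegrable_const (.of_forall fun x _ s _ => hderiv s x)).2

theorem hasDerivAt_abs_pow_succ {p : ℕ} (hp : 1 ≤ p) (u : ℝ) :
    HasDerivAt (fun v : ℝ => |v| ^ (p + 1)) ((p + 1) * |u| ^ (p - 1) * u) u := by
  have h := hasDerivAt_abs_rpow u (p := p + 1) (by exact_mod_cast Nat.lt_succ_of_le hp)
  simp only [← Nat.cast_add_one, Real.rpow_natCast] at h
  convert h using 2
  rw [← Real.rpow_natCast, Nat.cast_sub hp]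
  push_cast
  ring_nf

/-- The energy density at time `t` of a field with `φ = u`, `ψ = v`, `∂ₓφ = w`. -/
noncomputable def kgEnergyDensity (H m : ℝ) (p : ℕ) (t u v w : ℝ) : ℝ :=
  (1 / 2) * exp (-(H * t)) * v ^ 2 + (m ^ 2 / 2) * exp (H * t) * u ^ 2
    + (1 / ((p : ℝ) + 1)) * exp (H * t) * |u| ^ (p + 1) + (1 / 2) * exp (-(H * t)) * w ^ 2

noncomputable def kgExpansionRate (H m : ℝ) (p : ℕ) (t u v w : ℝ) : ℝ :=
  -(exp (-(2 * H * t))) * v ^ 2 + m ^ 2 * u ^ 2 + (2 / ((p : ℝ) + 1)) * |u| ^ (p + 1)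
    - exp (-(2 * H * t)) * w ^ 2

theorem continuous_uncurry_kgEnergyDensity {H m : ℝ} {p : ℕ} {φ ψ : ℝ → ℝ → ℝ}
    (hφ : ContDiff ℝ 1 (uncurry φ)) (hψ : Continuous (uncurry ψ)) :
    Continuous (uncurry fun s x => kgEnergyDensity H m p s (φ s x) (ψ s x) (deriv (φ s) x)) := by
  have := hφ.continuous
  have := (hφ.uncurry_deriv_snd (n := 0)).continuous
  unfold kgEnergyDensity
  fun_prop

theorem continuous_uncurry_kgExpansionRate {H m : ℝ} {p : ℕ} {φ ψ : ℝ → ℝ → ℝ}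
    (hφ : ContDiff ℝ 1 (uncurry φ)) (hψ : Continuous (uncurry ψ)) :
    Continuous (uncurry fun s x => kgExpansionRate H m p s (φ s x) (ψ s x) (deriv (φ s) x)) := by
  have := hφ.continuous
  have := (hφ.uncurry_deriv_snd (n := 0)).continuous
  unfold kgExpansionRate
  fun_prop

/-- Along the evolution, with `y = ∂ₓψ` and `z = ∂ₓ²φ`, the last term is `e^{-2Ht} ∂ₓ(ψ ∂ₓφ)`. -/
theorem hasDerivAt_kgEnergyDensity {H m : ℝ} {p : ℕ} (hp : 1 ≤ p) {u v w : ℝ → ℝ} {t y z : ℝ}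
    (hu : HasDerivAt u (exp (-(H * t)) * v t) t)
    (hv : HasDerivAt v (-m ^ 2 * exp (H * t) * u t - exp (H * t) * |u t| ^ (p - 1) * u t
      + exp (-(H * t)) * z) t)
    (hw : HasDerivAt w (exp (-(H * t)) * y) t) :
    HasDerivAt (fun s => kgEnergyDensity H m p s (u s) (v s) (w s))
      ((H / 2) * exp (H * t) * kgExpansionRate H m p t (u t) (v t) (w t)
        + exp (-(2 * H * t)) * (y * w t + v t * z)) t := by
  have hdecay : HasDerivAt (fun s => exp (-(H * s))) (exp (-(H * t)) * -H) t := by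
    simpa using ((hasDerivAt_id' t).const_mul H).neg.exp
  have hgrowth : HasDerivAt (fun s => exp (H * s)) (exp (H * t) * H) t :=
    ((hasDerivAt_id' t).const_mul H).exp.congr_deriv (by ring)
  have habs := (hasDerivAt_abs_pow_succ hp (u t)).comp t hu
  refine ((((hdecay.const_mul (1 / 2)).mul (hv.pow 2)).add ((hgrowth.const_mul (m ^ 2 / 2)).mul
    (hu.pow 2))).add ((hgrowth.const_mul (1 / ((p : ℝ) + 1))).mul habs)).add
    ((hdecay.const_mul (1 / 2)).mul (hw.pow 2)) |>.congr_deriv ?_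
  have hexp₂ : exp (-(2 * H * t)) = exp (-(H * t)) * exp (-(H * t)) := by
    rw [← exp_add]; ring_nf
  have hexp : exp (H * t) = (exp (-(H * t)))⁻¹ := by rw [exp_neg, inv_inv]
  simp only [kgExpansionRate, hexp₂, hexp, Function.comp, Pi.pow_apply]
  field_simp
  ring

theorem hasDerivAt_deriv_snd_of_deriv_fst_eq {φ ψ : ℝ → ℝ → ℝ} {a : ℝ → ℝ}
    (hφ : ContDiff ℝ 2 (uncurry φ)) (hψ : Differentiable ℝ (uncurry ψ))
    (hev : ∀ t x, deriv (fun s => φ s x) t = a t * ψ t x) (t x : ℝ) :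
    HasDerivAt (fun s => deriv (φ s) x) (a t * deriv (ψ t) x) t := by
  have hd : DifferentiableAt ℝ (fun s => deriv (φ s) x) t :=
    ((hφ.uncurry_deriv_snd (n := 1)).differentiable one_ne_zero (t, x)).hasDerivAt_slice_fst
      |>.differentiableAt
  refine hd.hasDerivAt.congr_deriv ?_
  rw [hφ.deriv_fst_deriv_snd_comm, funext (hev t)]
  exact deriv_const_mul _ (hψ (t, x)).hasDerivAt_slice_snd.differentiableAt

theorem hasDerivAt_kgEnergyDensity_of_evolution {H m : ℝ} {p : ℕ} (hp : 1 ≤ p)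
    {φ ψ : ℝ → ℝ → ℝ} (hφ : ContDiff ℝ 2 (uncurry φ)) (hψ : Differentiable ℝ (uncurry ψ))
    (hevφ : ∀ t x, deriv (fun s => φ s x) t = exp (-(H * t)) * ψ t x)
    (hevψ : ∀ t x, deriv (fun s => ψ s x) t
      = -m ^ 2 * exp (H * t) * φ t x - exp (H * t) * |φ t x| ^ (p - 1) * φ t x
        + exp (-(H * t)) * deriv (deriv (φ t)) x) (t x : ℝ) :
    HasDerivAt (fun s => kgEnergyDensity H m p s (φ s x) (ψ s x) (deriv (φ s) x))
      ((H / 2) * exp (H * t) * kgExpansionRate H m p t (φ t x) (ψ t x) (deriv (φ t) x)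
        + exp (-(2 * H * t)) * deriv (fun y => ψ t y * deriv (φ t) y) x) t := by
  have hψx : HasDerivAt (ψ t) (deriv (ψ t) x) x :=
    (hψ (t, x)).hasDerivAt_slice_snd.differentiableAt.hasDerivAt
  have hφxx : HasDerivAt (deriv (φ t)) (deriv (deriv (φ t)) x) x :=
    ((hφ.uncurry_deriv_snd (n := 1)).differentiable one_ne_zero (t, x)).hasDerivAt_slice_snd
      |>.differentiableAt.hasDerivAt
  have hflux : HasDerivAt (fun y => ψ t y * deriv (φ t) y)
      (deriv (ψ t) x * deriv (φ t) x + ψ t x * deriv (deriv (φ t)) x) x := hψx.mul hφxx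
  rw [hflux.deriv]
  refine hasDerivAt_kgEnergyDensity hp ?_ ?_ (hasDerivAt_deriv_snd_of_deriv_fst_eq hφ hψ hevφ t x)
  · rw [← hevφ]
    exact ((hφ.differentiable two_ne_zero) (t, x)).hasDerivAt_slice_fst.differentiableAt.hasDerivAt
  · rw [← hevψ]
    exact (hψ (t, x)).hasDerivAt_slice_fst.differentiableAt.hasDerivAt

theorem deSitter_total_hamiltonian_derivative
    (H m : ℝ) (p : ℕ) (hp : 2 ≤ p)
    (φ ψ : ℝ → ℝ → ℝ)
    (hφ : ContDiff ℝ 2 (Function.uncurry φ))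
    (hψ : ContDiff ℝ 2 (Function.uncurry ψ))
    (hφper : ∀ t x : ℝ, φ t (x + 1) = φ t x)
    (hψper : ∀ t x : ℝ, ψ t (x + 1) = ψ t x)
    (hevφ : ∀ t x : ℝ, deriv (fun s => φ s x) t = exp (-(H * t)) * ψ t x)
    (hevψ : ∀ t x : ℝ, deriv (fun s => ψ s x) t
      = -m ^ 2 * exp (H * t) * φ t x
        - exp (H * t) * |φ t x| ^ (p - 1) * φ t x
        + exp (-(H * t)) * deriv (deriv (fun y => φ t y)) x)
    (H_C : ℝ → ℝ)
    (hH_C : ∀ t : ℝ, H_C t = ∫ x in (0:ℝ)..1,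
      ((1 / 2) * exp (-(H * t)) * (ψ t x) ^ 2
        + (m ^ 2 / 2) * exp (H * t) * (φ t x) ^ 2
        + (1 / ((p : ℝ) + 1)) * exp (H * t) * |φ t x| ^ (p + 1)
        + (1 / 2) * exp (-(H * t)) * (deriv (fun y => φ t y) x) ^ 2)) :
    ∀ t : ℝ, HasDerivAt H_C
      ((H / 2) * exp (H * t) * ∫ x in (0:ℝ)..1,
        (-(exp (-(2 * H * t))) * (ψ t x) ^ 2
          + m ^ 2 * (φ t x) ^ 2
          + (2 / ((p : ℝ) + 1)) * |φ t x| ^ (p + 1)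
          - exp (-(2 * H * t)) * (deriv (fun y => φ t y) x) ^ 2)) t := by
  intro t
  have hφ₁ : ContDiff ℝ 1 (uncurry φ) := hφ.of_le one_le_two
  have hflux : ContDiff ℝ 1 (uncurry fun s y => ψ s y * deriv (φ s) y) :=
    (hψ.of_le one_le_two).mul hφ.uncurry_deriv_snd
  have hrate₀ := continuous_uncurry_kgExpansionRate (H := H) (m := m) (p := p) hφ₁ hψ.continuous
  have hflux₀ := (hflux.uncurry_deriv_snd (n := 0)).continuous
  have hrate : Continuous (uncurry fun s x =>
      (H / 2) * exp (H * s) * kgExpansionRate H m p s (φ s x) (ψ s x) (deriv (φ s) x)) := by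
    fun_prop
  have hflux' : Continuous (uncurry fun s x =>
      exp (-(2 * H * s)) * deriv (fun y => ψ s y * deriv (φ s) y) x) := by
    fun_prop
  have hflux_periodic : Periodic (fun y => ψ t y * deriv (φ t) y) 1 :=
    Periodic.mul (hψper t) (Periodic.deriv (hφper t))
  have hflux_integral : ∫ x in (0:ℝ)..1, deriv (fun y => ψ t y * deriv (φ t) y) x = 0 := by
    simpa using hflux_periodic.intervalIntegral_deriv_eq_zero
      (hflux.comp (contDiff_const.prodMk contDiff_id)) 0
  rw [funext hH_C]
  refine (intervalIntegral.hasDerivAt_integral_of_continuous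
    (continuous_uncurry_kgEnergyDensity hφ₁ hψ.continuous) (by exact hrate.add hflux')
    (hasDerivAt_kgEnergyDensity_of_evolution (by omega) hφ (hψ.differentiable two_ne_zero)
      hevφ hevψ) t).congr_deriv ?_
  rw [intervalIntegral.integral_add ((hrate.uncurry_left t).intervalIntegrable 0 1)
    ((hflux'.uncurry_left t).intervalIntegrable 0 1), intervalIntegral.integral_const_mul,
    intervalIntegral.integral_const_mul, hflux_integral, mul_zero, add_zero]
  rfl
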